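/- If F : A → B is an objective triangle functor satisfying condition (I), then the Verdier quotient functor V_F : A → A/Ker(F) is full. -/

import Mathlib

/-!
Write a morphism of the Verdier quotient as a left fraction `V(f) ≫ V(s)⁻¹` with cone of `s`
in `Ker F`. Then `F(s)` is invertible, and condition (I) gives `s'` with `F(s') ≫ F(s) = 𝟙`.
Objectivity says that `F(s' ≫ s) = F(𝟙)` forces `s' ≫ s - 𝟙` to factor through an object of
`Ker F`, which vanishes in the quotient, so `V(s') = V(s)⁻¹` and `V(f ≫ s')` is the given morphism.
-/

open CategoryTheory CategoryTheory.Limits CategoryTheory.Pretriangulated ZeroObject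

namespace CategoryTheory

lemma Localization.full_of_exists_section {C D : Type*} [Category C] [Category D]
    (L : C ⥤ D) (W : MorphismProperty C) [L.IsLocalization W] [W.HasLeftCalculusOfFractions]
    (h : ∀ ⦃X Y : C⦄ (s : X ⟶ Y), W s → ∃ s' : Y ⟶ X, L.map s' ≫ L.map s = 𝟙 _) :
    L.Full where
  map_surjective {X Y} φ := by
    obtain ⟨z, rfl⟩ := exists_leftFraction L W φ
    obtain ⟨s', hs'⟩ := h z.s z.hs
    have := Localization.inverts L W z.s z.hs
    refine ⟨z.f ≫ s', ?_⟩
    rw [← cancel_mono (L.map z.s), MorphismProperty.LeftFraction.map_comp_map_s,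
      L.map_comp, Category.assoc, hs', Category.comp_id]

section Pretriangulated

variable {C D E : Type*} [Category C] [Category D] [Category E] [HasZeroObject C]
  [HasShift C ℤ] [Preadditive C] [∀ n : ℤ, (shiftFunctor C n).Additive] [Pretriangulated C]

lemma ObjectProperty.isZero_obj_of_isInvertedBy_trW (P : ObjectProperty C)
    [P.IsStableUnderShift ℤ] [HasZeroMorphisms D] (L : C ⥤ D) [L.PreservesZeroMorphisms]
    (hL : P.trW.IsInvertedBy L) {X : C} (hX : P X) : IsZero (L.obj X) := by
  have : IsIso (L.map (0 : X ⟶ 0)) := hL _ (trW.mk' P (contractible_distinguished X) hX)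
  exact (L.map_isZero (isZero_zero C)).of_iso (asIso (L.map (0 : X ⟶ 0)))

namespace Functor

lemma isIso_map_of_trW [HasZeroObject E] [HasShift E ℤ] [Preadditive E]
    [∀ n : ℤ, (shiftFunctor E n).Additive] [Pretriangulated E]
    (F : C ⥤ E) [F.CommShift ℤ] [F.IsTriangulated] (P : ObjectProperty C)
    (hP : ∀ X, P X → IsZero (F.obj X)) {X Y : C} (s : X ⟶ Y) (hs : P.trW s) :
    IsIso (F.map s) := by
  obtain ⟨Z, g, h, hT, hZ⟩ := hs
  exact (Triangle.isZero₃_iff_isIso₁ _ (F.map_distinguished _ hT)).1 (hP Z hZ)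

def IsObjective [HasZeroMorphisms E] (F : C ⥤ E) : Prop :=
  ∀ (X Y : C) (f : X ⟶ Y), F.map f = 0 →
    ∃ (K : C) (g : X ⟶ K) (h : K ⟶ Y), IsZero (F.obj K) ∧ f = g ≫ h

lemma IsObjective.map_eq_map [Preadditive D] [Preadditive E] {F : C ⥤ E} [F.Additive]
    (hF : F.IsObjective) (P : ObjectProperty C) [P.IsStableUnderShift ℤ]
    (hP : ∀ X, IsZero (F.obj X) → P X) (L : C ⥤ D) [L.Additive] (hL : P.trW.IsInvertedBy L)
    {X Y : C} {f₁ f₂ : X ⟶ Y} (h : F.map f₁ = F.map f₂) : L.map f₁ = L.map f₂ := by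
  obtain ⟨K, g, h, hK, hfac⟩ := hF _ _ (f₁ - f₂) (by rw [F.map_sub, h, sub_self])
  have hLK := P.isZero_obj_of_isInvertedBy_trW L hL (hP K hK)
  rw [← sub_eq_zero, ← L.map_sub, hfac, L.map_comp, hLK.eq_of_src (L.map h) 0, comp_zero]

end Functor

end Pretriangulated

end CategoryTheory

universe v₁ v₂ u₁ u₂

variable {A : Type u₁} {B : Type u₂} [Category.{v₁} A] [Category.{v₂} B]
  [Preadditive A] [Preadditive B] [HasZeroObject A] [HasZeroObject B]
  [HasShift A ℤ] [HasShift B ℤ]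
  [∀ n : ℤ, (shiftFunctor A n).Additive] [∀ n : ℤ, (shiftFunctor B n).Additive]
  [Pretriangulated A] [Pretriangulated B] [IsTriangulated A] [IsTriangulated B]

theorem stmt15_general (F : A ⥤ B) [F.CommShift ℤ] [F.IsTriangulated]
    (S : ObjectProperty A) [S.IsTriangulated] (hS : ∀ X : A, S X ↔ IsZero (F.obj X))
    (hobj : ∀ (X Y : A) (f : X ⟶ Y), F.map f = 0 →
      ∃ (K : A) (g : X ⟶ K) (h : K ⟶ Y), IsZero (F.obj K) ∧ f = g ≫ h)
    (hI : ∀ (X Y : A) (u : X ⟶ Y), IsIso (F.map u) →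
      ∃ u' : Y ⟶ X, F.map u ≫ F.map u' = 𝟙 (F.obj X) ∧
        F.map u' ≫ F.map u = 𝟙 (F.obj Y)) :
    S.trW.Q.Full := by
  refine Localization.full_of_exists_section S.trW.Q S.trW fun X Y s hs => ?_
  obtain ⟨s', -, hs'⟩ := hI _ _ s (F.isIso_map_of_trW S (fun X => (hS X).1) s hs)
  refine ⟨s', ?_⟩
  rw [← Functor.map_comp, ← S.trW.Q.map_id]
  exact Functor.IsObjective.map_eq_map hobj S (fun X => (hS X).2) S.trW.Q
    (Localization.inverts _ _) (by rw [F.map_comp, hs', F.map_id])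

/-- If `F` is an objective triangle functor satisfying condition (I), then the
Verdier quotient functor `V_F : A ⟶ A/Ker F` is full. -/
theorem stmt15 (F : A ⥤ B) [F.CommShift ℤ] [F.IsTriangulated]
    (S : ObjectProperty A) [S.IsTriangulated] (hS : ∀ X : A, S X ↔ IsZero (F.obj X))
    (Ft : S.trW.Localization ⥤ B) (e : S.trW.Q ⋙ Ft ≅ F)
    (hobj : ∀ (X Y : A) (f : X ⟶ Y), F.map f = 0 →
      ∃ (K : A) (g : X ⟶ K) (h : K ⟶ Y), IsZero (F.obj K) ∧ f = g ≫ h)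
    (hI : ∀ (X Y : A) (u : X ⟶ Y), IsIso (F.map u) →
      ∃ u' : Y ⟶ X, F.map u ≫ F.map u' = 𝟙 (F.obj X) ∧
        F.map u' ≫ F.map u = 𝟙 (F.obj Y)) :
    S.trW.Q.Full :=
  stmt15_general F S hS hobj hI
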